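/- Let H be a symmetric d×d real matrix with eigenvalues λ_1 ≤ λ_2 ≤ … ≤ λ_d and unit eigenvector v_1 for λ_1, and let Π = v_1 v_1^T. If λ_1 < 0 < λ_2 and α + β > 1, then the matrix M = (1-α)H + α (I - Π) H (I - Π) - β Π H Π is positive definite. -/

import Mathlib

/-!
The eigenvectors `v i` of `H` are also eigenvectors of `P = v₀ v₀ᵀ` (eigenvalue `1` for `v₀`, `0`
otherwise), hence of `M`, with eigenvalue `(1 - α - β) μ₀ > 0` on `v₀` and `μ i ≥ μ₁ > 0` on the
others. A matrix with an orthonormal eigenbasis `(v i)` and positive eigenvalues `w` is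
`Vᵀ (diagonal w) V` with `V` orthogonal, hence positive definite.
-/

open Matrix

section OrthonormalEigenbasis

variable {n : Type*} [Fintype n] [DecidableEq n] {v : n → n → ℝ}

theorem Matrix.of_mul_transpose_eq_one_of_orthonormal
    (horth : ∀ i j, v i ⬝ᵥ v j = if i = j then 1 else 0) : of v * (of v)ᵀ = 1 := by
  ext i j
  simpa [mul_apply, one_apply, dotProduct] using horth i j

theorem Matrix.eq_transpose_mul_diagonal_mul_of_mulVec_eq_smul {M : Matrix n n ℝ} {w : n → ℝ}
    (horth : ∀ i j, v i ⬝ᵥ v j = if i = j then 1 else 0)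
    (heig : ∀ i, M *ᵥ v i = w i • v i) : M = (of v)ᵀ * diagonal w * of v := by
  have hcols : M * (of v)ᵀ = (of v)ᵀ * diagonal w := by
    ext a i
    rw [mul_diagonal]
    simpa [mul_apply, mulVec, dotProduct, mul_comm] using congrFun (heig i) a
  calc M = M * ((of v)ᵀ * of v) := by
        rw [mul_eq_one_comm.mp (of_mul_transpose_eq_one_of_orthonormal horth), Matrix.mul_one]
    _ = (of v)ᵀ * diagonal w * of v := by rw [← Matrix.mul_assoc, hcols]

theorem Matrix.posDef_of_orthonormal_eigenvectors {M : Matrix n n ℝ} {w : n → ℝ}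
    (horth : ∀ i j, v i ⬝ᵥ v j = if i = j then 1 else 0)
    (heig : ∀ i, M *ᵥ v i = w i • v i) (hw : ∀ i, 0 < w i) : M.PosDef := by
  rw [eq_transpose_mul_diagonal_mul_of_mulVec_eq_smul horth heig,
    ← conjTranspose_eq_transpose_of_trivial]
  exact (PosDef.diagonal hw).conjTranspose_mul_mul_same <| mulVec_injective_of_isUnit <|
    .of_mul_eq_one _ (of_mul_transpose_eq_one_of_orthonormal horth)

end OrthonormalEigenbasis

theorem Matrix.vecMulVec_self_mulVec_of_orthonormal {R ι n : Type*} [CommSemiring R] [Fintype n]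
    [DecidableEq ι] {v : ι → n → R} (horth : ∀ i j, v i ⬝ᵥ v j = if i = j then 1 else 0)
    (k i : ι) : vecMulVec (v k) (v k) *ᵥ v i = (if i = k then (1 : R) else 0) • v i := by
  rw [vecMulVec_mulVec, horth]
  obtain rfl | h := eq_or_ne i k <;> simp [*, Ne.symm]

theorem Matrix.mulVec_eq_smul_of_common_eigenvector {R n : Type*} [CommRing R] [Fintype n] [DecidableEq n]
    {H P : Matrix n n R} {x : n → R} {m e : R} (α β : R)
    (hH : H *ᵥ x = m • x) (hP : P *ᵥ x = e • x) :
    ((1 - α) • H + α • ((1 - P) * H * (1 - P)) - β • (P * H * P)) *ᵥ x =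
      ((1 - α) * m + α * ((1 - e) * m * (1 - e)) - β * (e * m * e)) • x := by
  have hQ : (1 - P) *ᵥ x = (1 - e) • x := by
    rw [sub_mulVec, one_mulVec, hP, sub_smul, one_smul]
  simp only [sub_mulVec, add_mulVec, smul_mulVec, ← mulVec_mulVec, hH, hP, hQ, mulVec_smul,
    smul_smul]
  module

/-- For a symmetric matrix `H` with orthonormal eigenbasis `v i` and
nondecreasing eigenvalues `μ 0 ≤ μ 1 ≤ …`, with unit eigenvector `v 0` for the
smallest eigenvalue, if `μ 0 < 0 < μ 1` and `α + β > 1`, then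
`M = (1-α) H + α (I-P) H (I-P) - β P H P` (where `P = v₀ v₀ᵀ`) is positive definite. -/
theorem stmt2 {d : ℕ} (hd : 2 ≤ d) (H : Matrix (Fin d) (Fin d) ℝ)
    (v : Fin d → (Fin d → ℝ)) (μ : Fin d → ℝ) (hmono : Monotone μ)
    (horth : ∀ i j, v i ⬝ᵥ v j = if i = j then (1 : ℝ) else 0)
    (heig : ∀ i, H.mulVec (v i) = μ i • v i)
    (hneg : μ ⟨0, by omega⟩ < 0) (hpos : 0 < μ ⟨1, by omega⟩)
    (α β : ℝ) (hab : 1 < α + β) :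
    let P : Matrix (Fin d) (Fin d) ℝ := vecMulVec (v ⟨0, by omega⟩) (v ⟨0, by omega⟩)
    ((1 - α) • H + α • ((1 - P) * H * (1 - P)) - β • (P * H * P)).PosDef := by
  intro P
  have hP (i : Fin d) : P *ᵥ v i = (if i = ⟨0, by omega⟩ then (1 : ℝ) else 0) • v i :=
    vecMulVec_self_mulVec_of_orthonormal horth _ i
  refine posDef_of_orthonormal_eigenvectors horth
    (fun i => mulVec_eq_smul_of_common_eigenvector α β (heig i) (hP i)) fun i => ?_
  by_cases hi : i = ⟨0, by omega⟩
  · subst hi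
    simp only [if_true]
    nlinarith
  · have hμi : μ ⟨1, by omega⟩ ≤ μ i :=
      hmono (Fin.le_def.mpr (Nat.one_le_iff_ne_zero.mpr fun h => hi (Fin.ext h)))
    simp only [hi, if_false]
    linarith
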